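/- arXiv:1805.11336 — 5 statements merged into one kernel-verified Lean document; each statement's English description precedes it below -/
import Mathlib

section
/- Let V be a 4-dimensional vector space over k and let W ⊆ ⋀²V be a 2-dimensional subspace. Assume there exists a nonzero ω₀ ∈ W with ω₀ ∧ ω₀ = 0 such that every ω ∈ W satisfying ω ∧ ω = 0 is a scalar multiple of ω₀ (i.e., the projective line ℙ(W) is tangent to the Plücker quadric of decomposable 2-vectors). Then there exists a basis v₀, v₁, v₂, v₃ of V such that v₀ ∧ v₁ and v₀ ∧ v₃ + v₁ ∧ v₂ form a basis of W. -/
/-!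
In a basis `e` of `V`, write `ω = a e₀₁ + b e₀₂ + c e₀₃ + d e₁₂ + f e₁₃ + g e₂₃` (`bivectorOf`).
The product of two such 2-vectors is the Plücker pairing times `e₀₁₂₃ ≠ 0`; in particular
`ω * ω = 2 (ag - bf + cd) e₀₁₂₃`. When this vanishes and `a ≠ 0`,
`ω = (a e₀ - d e₂ - f e₃) ∧ (e₁ + (b/a) e₂ + (c/a) e₃)`, and transpositions of the basis move any
nonzero coefficient to the place of `a`; so `ω₀ = p₀ ∧ p₁` for a basis `p`.

Take `η ∈ W` off the line `k ω₀` and write it in the basis `p`. Then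
`(s ω₀ + t η)² = 2t (s g + t (ag - bf + cd)) p₀₁₂₃`, and tangency says this binary form vanishes
only for `t = 0`, i.e. `g = 0` and `dc - bf ≠ 0`. Then
`η - a ω₀ = p₀ ∧ (b p₂ + c p₃) + p₁ ∧ (d p₂ + f p₃)`, which is the normal form in the basis
`p₀, p₁, d p₂ + f p₃, b p₂ + c p₃`.
-/

section

open ExteriorAlgebra Module

namespace ExteriorAlgebra

variable {k : Type*} [Field k] {V : Type*} [AddCommGroup V] [Module k V]

theorem ι_mul_ι_comm (x y : V) : ι k x * ι k y = -(ι k y * ι k x) :=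
  eq_neg_of_add_eq_zero_left (ι_add_mul_swap x y)

theorem ι_mul_ι_mul_comm (x y : V) (z : ExteriorAlgebra k V) :
    ι k x * (ι k y * z) = -(ι k y * (ι k x * z)) := by
  rw [← mul_assoc, ι_mul_ι_comm, neg_mul, mul_assoc]

theorem ι_mul_ι_mul_self (x : V) (z : ExteriorAlgebra k V) : ι k x * (ι k x * z) = 0 := by
  rw [← mul_assoc, ι_sq_zero, zero_mul]

-- The hypothesis `j < i` orients these rules, so that `simp` sorts products of the `ι (v i)`.
theorem ι_comp_mul_ι_comp_of_lt {n : ℕ} (v : Fin n → V) {i j : Fin n} (_h : j < i) :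
    ι k (v i) * ι k (v j) = -(ι k (v j) * ι k (v i)) :=
  ι_mul_ι_comm _ _

theorem ι_comp_mul_ι_comp_mul_of_lt {n : ℕ} (v : Fin n → V) {i j : Fin n} (_h : j < i)
    (z : ExteriorAlgebra k V) :
    ι k (v i) * (ι k (v j) * z) = -(ι k (v j) * (ι k (v i) * z)) :=
  ι_mul_ι_mul_comm _ _ _

theorem ιMulti_four (v : Fin 4 → V) :
    ιMulti k 4 v = ι k (v 0) * (ι k (v 1) * (ι k (v 2) * ι k (v 3))) := by
  simp [ιMulti_apply, Matrix.vecTail]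

theorem ιMulti_ne_zero_of_basis {n : ℕ} (e : Basis (Fin n) k V) : ιMulti k n e ≠ 0 := by
  intro h
  have := liftAlternating_apply_ιMulti (Pi.single (M := fun i => V [⋀^Fin i]→ₗ[k] k) n e.det) e
  rw [h, map_zero, Pi.single_eq_same, Basis.det_self] at this
  exact zero_ne_one this

end ExteriorAlgebra

variable {k : Type*} [Field k] {V : Type*} [AddCommGroup V] [Module k V]

noncomputable def bivectorOf (v : Fin 4 → V) (a b c d f g : k) : ExteriorAlgebra k V :=
  a • (ι k (v 0) * ι k (v 1)) + b • (ι k (v 0) * ι k (v 2)) + c • (ι k (v 0) * ι k (v 3)) +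
    d • (ι k (v 1) * ι k (v 2)) + f • (ι k (v 1) * ι k (v 3)) + g • (ι k (v 2) * ι k (v 3))

theorem bivectorOf_mul_bivectorOf (v : Fin 4 → V) (a b c d f g a' b' c' d' f' g' : k) :
    bivectorOf v a b c d f g * bivectorOf v a' b' c' d' f' g' =
      (a * g' + g * a' - b * f' - f * b' + c * d' + d * c') • ιMulti k 4 v := by
  simp (disch := decide) only [bivectorOf, ιMulti_four, add_mul, mul_add, smul_mul_assoc,
    mul_smul_comm, mul_assoc, ι_comp_mul_ι_comp_of_lt v, ι_comp_mul_ι_comp_mul_of_lt v, ι_sq_zero,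
    ι_mul_ι_mul_self, mul_neg, neg_neg, mul_zero, smul_zero, smul_neg, add_zero, zero_add]
  module

theorem bivectorOf_add (v : Fin 4 → V) (a b c d f g a' b' c' d' f' g' : k) :
    bivectorOf v a b c d f g + bivectorOf v a' b' c' d' f' g' =
      bivectorOf v (a + a') (b + b') (c + c') (d + d') (f + f') (g + g') := by
  simp only [bivectorOf]
  module

theorem smul_bivectorOf (v : Fin 4 → V) (t a b c d f g : k) :
    t • bivectorOf v a b c d f g =
      bivectorOf v (t * a) (t * b) (t * c) (t * d) (t * f) (t * g) := by
  simp only [bivectorOf]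
  module

theorem ι_mul_ι_eq_bivectorOf (e : Basis (Fin 4) k V) (x y : V) :
    ι k x * ι k y = bivectorOf e
      (e.repr x 0 * e.repr y 1 - e.repr x 1 * e.repr y 0)
      (e.repr x 0 * e.repr y 2 - e.repr x 2 * e.repr y 0)
      (e.repr x 0 * e.repr y 3 - e.repr x 3 * e.repr y 0)
      (e.repr x 1 * e.repr y 2 - e.repr x 2 * e.repr y 1)
      (e.repr x 1 * e.repr y 3 - e.repr x 3 * e.repr y 1)
      (e.repr x 2 * e.repr y 3 - e.repr x 3 * e.repr y 2) := by
  conv_lhs => rw [← e.sum_repr x, ← e.sum_repr y]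
  simp (disch := decide) only [bivectorOf, Fin.sum_univ_four, map_add, map_smul, add_mul, mul_add,
    smul_mul_assoc, mul_smul_comm, ι_comp_mul_ι_comp_of_lt e, ι_sq_zero, smul_zero, smul_neg,
    add_zero, zero_add]
  module

theorem exists_eq_bivectorOf (e : Basis (Fin 4) k V) {x : ExteriorAlgebra k V}
    (hx : x ∈ ⋀[k]^2 V) : ∃ a b c d f g : k, x = bivectorOf e a b c d f g := by
  rw [ExteriorAlgebra.exteriorPower, pow_two] at hx
  refine Submodule.mul_induction_on hx ?_ ?_
  · rintro _ ⟨x, rfl⟩ _ ⟨y, rfl⟩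
    exact ⟨_, _, _, _, _, _, ι_mul_ι_eq_bivectorOf e x y⟩
  · rintro _ _ ⟨a, b, c, d, f, g, rfl⟩ ⟨a', b', c', d', f', g', rfl⟩
    exact ⟨_, _, _, _, _, _, bivectorOf_add e _ _ _ _ _ _ _ _ _ _ _ _⟩

theorem exists_basis_coe_eq_of_det_ne_zero {n : Type*} [Fintype n] [DecidableEq n]
    (e : Basis n k V) {v : n → V} (h : e.det v ≠ 0) : ∃ p : Basis n k V, ⇑p = v :=
  have hv := e.is_basis_iff_det.2 (isUnit_iff_ne_zero.2 h)
  ⟨Basis.mk hv.1 hv.2.ge, Basis.coe_mk _ _⟩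

theorem exists_basis_bivectorOf_eq_of_ne_zero (e : Basis (Fin 4) k V) {a b c d f g : k}
    (hpl : a * g - b * f + c * d = 0) (ha : a ≠ 0) :
    ∃ p : Basis (Fin 4) k V, bivectorOf e a b c d f g = ι k (p 0) * ι k (p 1) := by
  have hdet : e.det ![a • e 0 - d • e 2 - f • e 3, e 1 + (b / a) • e 2 + (c / a) • e 3, e 2, e 3]
      = a := by
    simp [Basis.det_apply, Basis.toMatrix_apply, Matrix.det_succ_row_zero, Fin.sum_univ_succ,
      Fin.succAbove]
  obtain ⟨p, hp⟩ := exists_basis_coe_eq_of_det_ne_zero e (hdet ▸ ha)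
  refine ⟨p, ?_⟩
  have hg : g = (b * f - c * d) / a := by field_simp; linear_combination hpl
  simp (disch := decide) only [hp, Matrix.cons_val_zero, Matrix.cons_val_one,
    map_add, map_sub, map_smul, sub_mul, mul_add, smul_mul_assoc,
    mul_smul_comm, ι_comp_mul_ι_comp_of_lt e, ι_sq_zero, smul_zero, smul_neg]
  rw [bivectorOf, hg]
  match_scalars <;> field_simp
  ring

theorem bivectorOf_eq_reindex_swap_zero_one (e : Basis (Fin 4) k V) (a b c d f g : k) :
    bivectorOf e a b c d f g = bivectorOf (e.reindex (Equiv.swap 0 1)) (-a) d f b c g := by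
  simp (disch := decide) only [bivectorOf, e.coe_reindex, Equiv.symm_swap, Function.comp_apply,
    Equiv.swap_apply_left, Equiv.swap_apply_right, Equiv.swap_apply_of_ne_of_ne,
    ι_comp_mul_ι_comp_of_lt e]
  module

theorem bivectorOf_eq_reindex_swap_one_two (e : Basis (Fin 4) k V) (a b c d f g : k) :
    bivectorOf e a b c d f g = bivectorOf (e.reindex (Equiv.swap 1 2)) b a c (-d) g f := by
  simp (disch := decide) only [bivectorOf, e.coe_reindex, Equiv.symm_swap, Function.comp_apply,
    Equiv.swap_apply_left, Equiv.swap_apply_right, Equiv.swap_apply_of_ne_of_ne,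
    ι_comp_mul_ι_comp_of_lt e]
  module

theorem bivectorOf_eq_reindex_swap_two_three (e : Basis (Fin 4) k V) (a b c d f g : k) :
    bivectorOf e a b c d f g = bivectorOf (e.reindex (Equiv.swap 2 3)) a c b f d (-g) := by
  simp (disch := decide) only [bivectorOf, e.coe_reindex, Equiv.symm_swap, Function.comp_apply,
    Equiv.swap_apply_left, Equiv.swap_apply_right, Equiv.swap_apply_of_ne_of_ne,
    ι_comp_mul_ι_comp_of_lt e]
  module

-- Each transposition of the basis permutes the coefficients up to sign; chains of them move any
-- nonzero coefficient to the first slot.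
theorem exists_basis_bivectorOf_eq_ι_mul_ι (e : Basis (Fin 4) k V) {a b c d f g : k}
    (hpl : a * g - b * f + c * d = 0)
    (hne : a ≠ 0 ∨ b ≠ 0 ∨ c ≠ 0 ∨ d ≠ 0 ∨ f ≠ 0 ∨ g ≠ 0) :
    ∃ p : Basis (Fin 4) k V, bivectorOf e a b c d f g = ι k (p 0) * ι k (p 1) := by
  rcases hne with h | h | h | h | h | h
  · exact exists_basis_bivectorOf_eq_of_ne_zero e hpl h
  · rw [bivectorOf_eq_reindex_swap_one_two]
    exact exists_basis_bivectorOf_eq_of_ne_zero _ (by linear_combination -hpl) h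
  · rw [bivectorOf_eq_reindex_swap_two_three, bivectorOf_eq_reindex_swap_one_two]
    exact exists_basis_bivectorOf_eq_of_ne_zero _ (by linear_combination hpl) h
  · rw [bivectorOf_eq_reindex_swap_zero_one, bivectorOf_eq_reindex_swap_one_two]
    exact exists_basis_bivectorOf_eq_of_ne_zero _ (by linear_combination hpl) h
  · rw [bivectorOf_eq_reindex_swap_zero_one, bivectorOf_eq_reindex_swap_two_three,
      bivectorOf_eq_reindex_swap_one_two]
    exact exists_basis_bivectorOf_eq_of_ne_zero _ (by linear_combination -hpl) h
  · rw [bivectorOf_eq_reindex_swap_one_two, bivectorOf_eq_reindex_swap_zero_one,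
      bivectorOf_eq_reindex_swap_two_three, bivectorOf_eq_reindex_swap_one_two]
    exact exists_basis_bivectorOf_eq_of_ne_zero _ (by linear_combination hpl) h

theorem exists_basis_eq_ι_mul_ι_of_mul_self_eq_zero [NeZero (2 : k)] (e : Basis (Fin 4) k V)
    {ω : ExteriorAlgebra k V} (hω : ω ∈ ⋀[k]^2 V) (hω0 : ω ≠ 0) (hsq : ω * ω = 0) :
    ∃ p : Basis (Fin 4) k V, ω = ι k (p 0) * ι k (p 1) := by
  obtain ⟨a, b, c, d, f, g, rfl⟩ := exists_eq_bivectorOf e hω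
  refine exists_basis_bivectorOf_eq_ι_mul_ι e ?_ ?_
  · rw [bivectorOf_mul_bivectorOf] at hsq
    have h2 : (2 : k) * (a * g - b * f + c * d) = 0 := by
      linear_combination (smul_eq_zero.1 hsq).resolve_right (ιMulti_ne_zero_of_basis e)
    exact (mul_eq_zero.1 h2).resolve_left two_ne_zero
  · by_contra! h
    obtain ⟨rfl, rfl, rfl, rfl, rfl, rfl⟩ := h
    exact hω0 (by simp [bivectorOf])

theorem eq_zero_and_ne_zero_of_tangent (p : Basis (Fin 4) k V)
    {W : Submodule k (ExteriorAlgebra k V)} {a b c d f g : k}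
    (hω₀ : ι k (p 0) * ι k (p 1) ∈ W) (hη : bivectorOf p a b c d f g ∈ W)
    (hηω₀ : ∀ s : k, bivectorOf p a b c d f g ≠ s • (ι k (p 0) * ι k (p 1)))
    (htang : ∀ ω ∈ W, ω * ω = 0 → ∃ s : k, ω = s • (ι k (p 0) * ι k (p 1))) :
    g = 0 ∧ d * c - b * f ≠ 0 := by
  set ω₀ := ι k (p 0) * ι k (p 1)
  set η := bivectorOf p a b c d f g
  set P := a * g - b * f + c * d
  have hsq : ∀ s t : k,
      (s • ω₀ + t • η) * (s • ω₀ + t • η) = (2 * t * (s * g + t * P)) • ιMulti k 4 p := by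
    intro s t
    have hω₀_eq : ω₀ = bivectorOf p 1 0 0 0 0 0 := by simp [ω₀, bivectorOf]
    rw [hω₀_eq, smul_bivectorOf, smul_bivectorOf, bivectorOf_add, bivectorOf_mul_bivectorOf]
    congr 1
    ring
  -- a square-zero element `s • ω₀ + t • η` with `t ≠ 0` would put `η` on the line through `ω₀`
  have hline : ∀ s t : k, t ≠ 0 → s * g + t * P ≠ 0 := by
    intro s t ht h
    obtain ⟨r, hr⟩ := htang _ (W.add_mem (W.smul_mem s hω₀) (W.smul_mem t hη))
      (by rw [hsq, h, mul_zero, zero_smul])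
    apply hηω₀ (t⁻¹ * (r - s))
    rw [mul_smul, sub_smul, ← hr, add_sub_cancel_left, smul_smul, inv_mul_cancel₀ ht, one_smul]
  have hP : P ≠ 0 := by simpa using hline 0 1 one_ne_zero
  have hg : g = 0 := by
    by_contra hg
    exact hline P (-g) (neg_ne_zero.2 hg) (by ring)
  refine ⟨hg, fun h => hP ?_⟩
  simp only [P, hg]
  linear_combination h

theorem exists_basis_ι_mul_ι_add_ι_mul_ι_eq (p : Basis (Fin 4) k V) {b c d f : k}
    (h : d * c - b * f ≠ 0) :
    ∃ q : Basis (Fin 4) k V, ι k (q 0) * ι k (q 1) = ι k (p 0) * ι k (p 1) ∧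
      ι k (q 0) * ι k (q 3) + ι k (q 1) * ι k (q 2) = bivectorOf p 0 b c d f 0 := by
  have hdet : p.det ![p 0, p 1, d • p 2 + f • p 3, b • p 2 + c • p 3] = d * c - b * f := by
    simp [Basis.det_apply, Basis.toMatrix_apply, Matrix.det_succ_row_zero, Fin.sum_univ_succ,
      Fin.succAbove, ← sub_eq_add_neg]
  obtain ⟨q, hq⟩ := exists_basis_coe_eq_of_det_ne_zero p (hdet ▸ h)
  refine ⟨q, by simp [hq], ?_⟩
  simp only [hq, bivectorOf, Matrix.cons_val, map_add, map_smul, mul_add, mul_smul_comm]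
  module

theorem Submodule.span_pair_eq_of_linearIndependent {K M : Type*} [Field K] [AddCommGroup M]
    [Module K M] {W : Submodule K M} (hW : Module.finrank K W = 2) {x y : M} (hx : x ∈ W)
    (hy : y ∈ W) (hxy : LinearIndependent K ![x, y]) : Submodule.span K {x, y} = W := by
  have : Module.Finite K W := Module.finite_of_finrank_pos (by omega)
  refine Submodule.eq_of_le_of_finrank_eq (Submodule.span_le.2 (Set.pair_subset hx hy)) ?_
  rw [hW, ← Matrix.range_cons_cons_empty x y ![], finrank_span_eq_card hxy, Fintype.card_fin]

theorem Submodule.exists_mem_forall_ne_smul {K M : Type*} [Field K] [AddCommGroup M]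
    [Module K M] {W : Submodule K M} (hW : 1 < Module.finrank K W) (x : M) :
    ∃ y ∈ W, ∀ s : K, y ≠ s • x := by
  by_contra! h
  have hle : W ≤ K ∙ x := fun y hy =>
    Submodule.mem_span_singleton.2 ((h y hy).imp fun _ => Eq.symm)
  have := (Submodule.finrank_mono hle).trans (finrank_span_le_card ({x} : Set M))
  rw [Set.toFinset_singleton, Finset.card_singleton] at this
  omega

end

theorem stmt_1_general {k : Type*} [Field k] [CharZero k]
    {V : Type*} [AddCommGroup V] [Module k V]
    (hV : Module.finrank k V = 4)
    (W : Submodule k (ExteriorAlgebra k V))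
    (hW2 : W ≤ ⋀[k]^2 V)
    (hWrank : Module.finrank k W = 2)
    (ω₀ : ExteriorAlgebra k V) (hω₀W : ω₀ ∈ W) (hω₀ : ω₀ ≠ 0) (h₀ : ω₀ * ω₀ = 0)
    (htang : ∀ ω ∈ W, ω * ω = 0 → ∃ c : k, ω = c • ω₀) :
    ∃ b : Module.Basis (Fin 4) k V,
      Submodule.span k {ExteriorAlgebra.ι k (b 0) * ExteriorAlgebra.ι k (b 1),
        ExteriorAlgebra.ι k (b 0) * ExteriorAlgebra.ι k (b 3) +
          ExteriorAlgebra.ι k (b 1) * ExteriorAlgebra.ι k (b 2)} = W ∧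
      LinearIndependent k ![ExteriorAlgebra.ι k (b 0) * ExteriorAlgebra.ι k (b 1),
        ExteriorAlgebra.ι k (b 0) * ExteriorAlgebra.ι k (b 3) +
          ExteriorAlgebra.ι k (b 1) * ExteriorAlgebra.ι k (b 2)] := by
  have : Module.Finite k V := Module.finite_of_finrank_pos (by omega)
  obtain ⟨p, rfl⟩ := exists_basis_eq_ι_mul_ι_of_mul_self_eq_zero
    (Module.finBasisOfFinrankEq k V hV) (hW2 hω₀W) hω₀ h₀
  set ω₀ := ExteriorAlgebra.ι k (p 0) * ExteriorAlgebra.ι k (p 1)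
  obtain ⟨η, hηW, hη⟩ := Submodule.exists_mem_forall_ne_smul (W := W) (by omega) ω₀
  obtain ⟨a, b, c, d, f, g, rfl⟩ := exists_eq_bivectorOf p (hW2 hηW)
  obtain ⟨rfl, hG⟩ := eq_zero_and_ne_zero_of_tangent p hω₀W hηW hη htang
  obtain ⟨q, hq01, hq⟩ := exists_basis_ι_mul_ι_add_ι_mul_ι_eq p hG
  have hη' : bivectorOf p 0 b c d f 0 = bivectorOf p a b c d f 0 - a • ω₀ := by
    simp only [ω₀, bivectorOf]
    module
  have hli : LinearIndependent k ![ω₀, bivectorOf p 0 b c d f 0] := by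
    refine (LinearIndependent.pair_iff' hω₀).2 fun s hs => hη (s + a) ?_
    rw [add_smul, hs, hη', sub_add_cancel]
  refine ⟨q, ?_, ?_⟩ <;> rw [hq01, hq]
  · refine Submodule.span_pair_eq_of_linearIndependent hWrank hω₀W ?_ hli
    rw [hη']
    exact W.sub_mem hηW (W.smul_mem a hω₀W)
  · exact hli

/-- If the projective line `ℙ(W)` attached to a 2-dimensional subspace
`W ⊆ ⋀²V` (with `V` of dimension 4) is tangent to the Plücker quadric of decomposable
2-vectors, i.e. there is a nonzero decomposable `ω₀ ∈ W` such that every decomposable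
element of `W` is a scalar multiple of `ω₀`, then there is a basis `v₀, v₁, v₂, v₃` of `V`
such that `v₀ ∧ v₁` and `v₀ ∧ v₃ + v₁ ∧ v₂` form a basis of `W`. -/
theorem stmt_1 {k : Type*} [Field k] [IsAlgClosed k] [CharZero k]
    {V : Type*} [AddCommGroup V] [Module k V]
    (hV : Module.finrank k V = 4)
    (W : Submodule k (ExteriorAlgebra k V))
    (hW2 : W ≤ ⋀[k]^2 V)
    (hWrank : Module.finrank k W = 2)
    (ω₀ : ExteriorAlgebra k V) (hω₀W : ω₀ ∈ W) (hω₀ : ω₀ ≠ 0) (h₀ : ω₀ * ω₀ = 0)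
    (htang : ∀ ω ∈ W, ω * ω = 0 → ∃ c : k, ω = c • ω₀) :
    ∃ b : Module.Basis (Fin 4) k V,
      Submodule.span k {ExteriorAlgebra.ι k (b 0) * ExteriorAlgebra.ι k (b 1),
        ExteriorAlgebra.ι k (b 0) * ExteriorAlgebra.ι k (b 3) +
          ExteriorAlgebra.ι k (b 1) * ExteriorAlgebra.ι k (b 2)} = W ∧
      LinearIndependent k ![ExteriorAlgebra.ι k (b 0) * ExteriorAlgebra.ι k (b 1),
        ExteriorAlgebra.ι k (b 0) * ExteriorAlgebra.ι k (b 3) +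
          ExteriorAlgebra.ι k (b 1) * ExteriorAlgebra.ι k (b 2)] :=
  stmt_1_general hV W hW2 hWrank ω₀ hω₀W hω₀ h₀ htang
end

section
/- Let n ≥ 1 and m ≥ 1 be integers and let h_{ij} (1 ≤ i ≤ 2, 1 ≤ j ≤ m) be linear forms in S = k[x₀,…,x_n] such that for every nonzero vector a ∈ k^{n+1} the 2×m scalar matrix (h_{ij}(a)) has rank 2 (equivalently, the morphism ε : mO_{ℙⁿ} → 2O_{ℙⁿ}(1) defined by this matrix of linear forms is an epimorphism of sheaves). Then the k-linear map (S₁)^m → (S₂)² sending (ℓ₁,…,ℓ_m) to (Σⱼ h_{1j}ℓⱼ, Σⱼ h_{2j}ℓⱼ) is surjective (i.e., H⁰(ε(1)) : H⁰(mO_{ℙⁿ}(1)) → H⁰(2O_{ℙⁿ}(2)) is surjective). -/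
/-!
By duality it suffices to show that a functional `(ψ₀, ψ₁)` on `S₂²` vanishing on the image is
zero. A functional `ψ` on `S₂` is the symmetric bilinear form `Bψ(v, w) = ψ(ℓ_v ℓ_w)` on
`k^{n+1}`, and vanishing on the image says `B₀(c₀ⱼ, ·) + B₁(c₁ⱼ, ·) = 0`, where `cᵢⱼ` is the
coefficient vector of `hᵢⱼ`. If `v` is in the kernel of `αB₀ + βB₁`, the points `aᵢ = Bᵢ(v, ·)`
satisfy `α a₀ + β a₁ = 0` and `h₀ⱼ(a₀) + h₁ⱼ(a₁) = 0` for all `j`, and the rank condition forces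
`a₀ = a₁ = 0`. So every member of the pencil spanned by `B₀, B₁` has the same kernel. Over an
algebraically closed field a pencil on a nonzero space always has a member with a larger kernel
(an eigenvalue of `B₁⁻¹B₀`), hence `B₀ = B₁ = 0`.
-/

open Module LinearMap MvPolynomial

section Pencil

variable {k U U' V : Type*} [Field k] [IsAlgClosed k]
  [AddCommGroup U] [Module k U] [FiniteDimensional k U]
  [AddCommGroup U'] [Module k U'] [FiniteDimensional k U']
  [AddCommGroup V] [Module k V] [FiniteDimensional k V]

-- If `G` is invertible, an eigenvalue `μ` of `G⁻¹F` gives the singular member `F - μG`.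
theorem LinearMap.exists_ker_smul_add_smul_ne_bot [Nontrivial U]
    (hdim : finrank k U = finrank k U') (F G : U →ₗ[k] U') :
    ∃ α β : k, (α, β) ≠ 0 ∧ ker (α • F + β • G) ≠ ⊥ := by
  by_cases hG : ker G = ⊥
  · have hGinj := ker_eq_bot.mp hG
    let e := LinearEquiv.ofBijective G
      ⟨hGinj, (injective_iff_surjective_of_finrank_eq_finrank hdim).mp hGinj⟩
    obtain ⟨μ, hμ⟩ := Module.End.exists_eigenvalue (e.symm.toLinearMap ∘ₗ F)
    obtain ⟨u, hu⟩ := hμ.exists_hasEigenvector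
    have hFu : F u = μ • G u := by
      rw [← map_smul, ← hu.apply_eq_smul]
      exact (e.apply_symm_apply (F u)).symm
    refine ⟨1, -μ, by simp, (Submodule.ne_bot_iff _).mpr ⟨u, ?_, hu.2⟩⟩
    simp [hFu]
  · exact ⟨0, 1, by simp, by simpa using hG⟩

-- Restricted to a complement of the common kernel, the forms give a pencil of injective maps
-- `W → Dual k W`.
theorem LinearMap.BilinForm.eq_zero_of_ker_smul_add_smul_le {B₀ B₁ : LinearMap.BilinForm k V}
    (h₀ : B₀.IsSymm) (h₁ : B₁.IsSymm)
    (hker : ∀ α β : k, (α, β) ≠ 0 → ker (α • B₀ + β • B₁) ≤ ker B₀ ⊓ ker B₁) :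
    B₀ = 0 ∧ B₁ = 0 := by
  set N := ker B₀ ⊓ ker B₁
  suffices hN : N = ⊤ by
    have hv : ∀ v, v ∈ N := fun v => hN ▸ Submodule.mem_top
    exact ⟨LinearMap.ext fun v => mem_ker.mp (hv v).1, LinearMap.ext fun v => mem_ker.mp (hv v).2⟩
  by_contra hN
  obtain ⟨W, hW⟩ := N.exists_isCompl
  have : Nontrivial W := Submodule.nontrivial_iff_ne_bot.mpr fun hW0 => hN <| by
    simpa [hW0] using hW.sup_eq_top
  obtain ⟨α, β, hαβ, hker'⟩ := exists_ker_smul_add_smul_ne_bot Subspace.dual_finrank_eq.symm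
    (B₀.compl₁₂ W.subtype W.subtype) (B₁.compl₁₂ W.subtype W.subtype)
  obtain ⟨w, hw, hw0⟩ := (Submodule.ne_bot_iff _).mp hker'
  have hwN : (w : V) ∈ ker (α • B₀ + β • B₁) := by
    rw [mem_ker]
    ext v
    obtain ⟨n, hn, w', hw', rfl⟩ :=
      Submodule.mem_sup.mp (hW.sup_eq_top ▸ Submodule.mem_top : v ∈ N ⊔ W)
    have hBn : B₀ w n = 0 ∧ B₁ w n = 0 := by
      rw [h₀.eq, h₁.eq, mem_ker.mp hn.1, mem_ker.mp hn.2]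
      simp
    have hBw' : α * B₀ w w' + β * B₁ w w' = 0 := by simpa using congr($hw ⟨w', hw'⟩)
    simp only [add_apply, smul_apply, map_add, hBn.1, hBn.2, smul_eq_mul, LinearMap.zero_apply]
    linear_combination hBw'
  exact hw0 (Subtype.ext (Submodule.disjoint_def.mp hW.disjoint _ (hker α β hαβ hwN) w.2))

end Pencil

theorem eq_zero_of_smul_add_smul_eq_zero_of_linearIndependent {k E F : Type*} [Field k]
    [AddCommGroup E] [Module k E] [AddCommGroup F] [Module k F]
    (r₀ r₁ : E →ₗ[k] F) (hr : ∀ a ≠ 0, LinearIndependent k ![r₀ a, r₁ a])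
    {α β : k} (hαβ : (α, β) ≠ 0) {a₀ a₁ : E} (hpencil : α • a₀ + β • a₁ = 0)
    (hrel : r₀ a₀ + r₁ a₁ = 0) : a₀ = 0 ∧ a₁ = 0 := by
  have hr' : ∀ a (s t : k), s • r₀ a + t • r₁ a = 0 → (s, t) ≠ 0 → a = 0 := by
    intro a s t h hst
    by_contra ha
    obtain ⟨rfl, rfl⟩ := LinearIndependent.pair_iff.mp (hr a ha) s t h
    exact hst rfl
  by_cases hα : α = 0
  · have hβ : β ≠ 0 := by rintro rfl; exact hαβ (by simp [hα])
    have ha₁ : a₁ = 0 := by simpa [hα, hβ] using hpencil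
    exact ⟨hr' a₀ 1 0 (by simpa [ha₁] using hrel) (by simp), ha₁⟩
  · have hαa₀ : α • a₀ = (-β) • a₁ := by
      rw [neg_smul]
      exact eq_neg_of_add_eq_zero_left hpencil
    have ha₁ : a₁ = 0 := hr' a₁ (-β) α
      (by rw [← map_smul, ← hαa₀, map_smul, ← smul_add, hrel, smul_zero]) (by simp [hα])
    exact ⟨(smul_eq_zero.mp (by simpa [ha₁] using hαa₀)).resolve_left hα, ha₁⟩

theorem Matrix.linearIndependent_row_of_rank_eq_card {k m n : Type*} [Field k] [Fintype m]
    [Fintype n] {M : Matrix m n k} (hM : M.rank = Fintype.card m) : LinearIndependent k M.row :=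
  linearIndependent_iff_card_eq_finrank_span.mpr (by rw [← hM, M.rank_eq_finrank_span_row]; rfl)

namespace MvPolynomial

section LinearForm

variable {R σ : Type*} [CommSemiring R] [Fintype σ]

noncomputable def linearForm : (σ → R) →ₗ[R] MvPolynomial σ R :=
  Fintype.linearCombination R X

theorem linearForm_apply (v : σ → R) : linearForm v = ∑ i, v i • X i :=
  Fintype.linearCombination_apply R X v

@[simp]
theorem linearForm_single [DecidableEq σ] (i : σ) : linearForm (Pi.single i (1 : R)) = X i := by
  simp [linearForm]

theorem linearForm_mem_homogeneousSubmodule_one (v : σ → R) :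
    linearForm v ∈ homogeneousSubmodule σ R 1 := by
  rw [homogeneousSubmodule_one_eq_span_X, Submodule.mem_span_range_iff_exists_fun]
  exact ⟨v, (linearForm_apply v).symm⟩

theorem exists_linearForm_eq {p : MvPolynomial σ R} (hp : p.IsHomogeneous 1) :
    ∃ c : σ → R, linearForm c = p := by
  rw [← mem_homogeneousSubmodule, homogeneousSubmodule_one_eq_span_X,
    Submodule.mem_span_range_iff_exists_fun] at hp
  simpa [linearForm_apply] using hp

theorem eval_linearForm [DecidableEq σ] (f : Dual R (σ → R)) (c : σ → R) :
    eval (fun i => f (Pi.single i 1)) (linearForm c) = f c := by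
  conv_rhs => rw [← Finset.univ_sum_single c]
  simp only [linearForm_apply, map_sum]
  refine Finset.sum_congr rfl fun i _ => ?_
  rw [smul_eq_C_mul, map_mul, eval_C, eval_X, ← smul_eq_mul, ← map_smul, ← Pi.single_smul',
    smul_eq_mul, mul_one]

noncomputable def polarForm (ψ : MvPolynomial σ R →ₗ[R] R) : LinearMap.BilinForm R (σ → R) :=
  ((LinearMap.mul R _).compl₁₂ linearForm linearForm).compr₂ ψ

@[simp]
theorem polarForm_apply (ψ : MvPolynomial σ R →ₗ[R] R) (v w : σ → R) :
    polarForm ψ v w = ψ (linearForm v * linearForm w) := rfl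

theorem polarForm_isSymm (ψ : MvPolynomial σ R →ₗ[R] R) : (polarForm ψ).IsSymm :=
  ⟨fun v w => by simp [mul_comm]⟩

theorem homogeneousSubmodule_two_le_ker_of_polarForm_eq_zero [DecidableEq σ]
    {ψ : MvPolynomial σ R →ₗ[R] R} (hψ : polarForm ψ = 0) :
    homogeneousSubmodule σ R 2 ≤ ker ψ := by
  rw [← homogeneousSubmodule_one_pow, pow_two, homogeneousSubmodule_one_eq_span_X,
    Submodule.span_mul_span, Submodule.span_le]
  rintro _ ⟨_, ⟨i, rfl⟩, _, ⟨j, rfl⟩, rfl⟩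
  simpa using congr($hψ (Pi.single i 1) (Pi.single j 1))

end LinearForm

variable {k σ ι : Type*} [Field k] [Fintype σ]

theorem linearIndependent_apply_of_rank_eval_eq_two [DecidableEq σ] [Fintype ι]
    (c : Fin 2 → ι → σ → k)
    (hrank : ∀ a : σ → k, a ≠ 0 → (Matrix.of fun i j => eval a (linearForm (c i j))).rank = 2)
    {f : Dual k (σ → k)} (hf : f ≠ 0) :
    LinearIndependent k ![fun j => f (c 0 j), fun j => f (c 1 j)] := by
  have ha : (fun i => f (Pi.single i 1)) ≠ 0 := fun ha =>
    hf ((Pi.basisFun k σ).ext fun i => by simpa using congrFun ha i)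
  convert Matrix.linearIndependent_row_of_rank_eq_card (hrank _ ha) using 1
  ext i j
  fin_cases i <;> simp [Matrix.row, eval_linearForm]

theorem polarForm_eq_zero_of_linearIndependent [IsAlgClosed k] (c : Fin 2 → ι → σ → k)
    (hindep : ∀ f : Dual k (σ → k), f ≠ 0 →
      LinearIndependent k ![fun j => f (c 0 j), fun j => f (c 1 j)])
    {ψ₀ ψ₁ : MvPolynomial σ k →ₗ[k] k}
    (hψ : ∀ j v,
      ψ₀ (linearForm (c 0 j) * linearForm v) + ψ₁ (linearForm (c 1 j) * linearForm v) = 0) :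
    polarForm ψ₀ = 0 ∧ polarForm ψ₁ = 0 := by
  refine BilinForm.eq_zero_of_ker_smul_add_smul_le (polarForm_isSymm ψ₀) (polarForm_isSymm ψ₁)
    fun α β hαβ v hv => ?_
  let r (i : Fin 2) : Dual k (σ → k) →ₗ[k] ι → k :=
    LinearMap.pi fun j => LinearMap.applyₗ (c i j)
  have hrel : r 0 (polarForm ψ₀ v) + r 1 (polarForm ψ₁ v) = 0 := by
    ext j
    simpa [r, mul_comm (linearForm v)] using hψ j v
  obtain ⟨h₀, h₁⟩ := eq_zero_of_smul_add_smul_eq_zero_of_linearIndependent (r 0) (r 1)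
    hindep hαβ (by simpa using hv) hrel
  exact ⟨mem_ker.mpr h₀, mem_ker.mpr h₁⟩

theorem pi_homogeneousSubmodule_two_le_map_mulVecLin [IsAlgClosed k] [DecidableEq σ]
    [Fintype ι] [DecidableEq ι] (c : Fin 2 → ι → σ → k)
    (hindep : ∀ f : Dual k (σ → k), f ≠ 0 →
      LinearIndependent k ![fun j => f (c 0 j), fun j => f (c 1 j)]) :
    Submodule.pi Set.univ (fun _ : Fin 2 => homogeneousSubmodule σ k 2) ≤
      (Submodule.pi Set.univ fun _ : ι => homogeneousSubmodule σ k 1).map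
        ((Matrix.of fun i j => linearForm (c i j)).mulVecLin.restrictScalars k) := by
  intro y hy
  by_contra hy'
  obtain ⟨φ, hφy, hφ⟩ := Submodule.exists_dual_map_eq_bot_of_notMem hy' inferInstance
  let ψ (i : Fin 2) : MvPolynomial σ k →ₗ[k] k :=
    φ ∘ₗ LinearMap.single k (fun _ : Fin 2 => MvPolynomial σ k) i
  have hφψ (z : Fin 2 → MvPolynomial σ k) : φ z = ψ 0 (z 0) + ψ 1 (z 1) := by
    conv_lhs => rw [← Finset.univ_sum_single z]
    simp [ψ, Fin.sum_univ_two]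
  have hψ (j : ι) (v : σ → k) :
      ψ 0 (linearForm (c 0 j) * linearForm v) + ψ 1 (linearForm (c 1 j) * linearForm v) = 0 := by
    have hmem : Pi.single j (linearForm v) ∈
        Submodule.pi Set.univ fun _ : ι => homogeneousSubmodule σ k 1 := by
      intro i _
      rcases eq_or_ne i j with rfl | hij
      · simpa using linearForm_mem_homogeneousSubmodule_one v
      · simp [Pi.single_eq_of_ne hij]
    have := (Submodule.eq_bot_iff _).mp hφ _ ⟨_, ⟨_, hmem, rfl⟩, rfl⟩
    simpa [hφψ, mul_comm (linearForm v)] using this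
  obtain ⟨hB₀, hB₁⟩ := polarForm_eq_zero_of_linearIndependent c hindep hψ
  apply hφy
  rw [hφψ, mem_ker.mp (homogeneousSubmodule_two_le_ker_of_polarForm_eq_zero hB₀ (hy 0 trivial)),
    mem_ker.mp (homogeneousSubmodule_two_le_ker_of_polarForm_eq_zero hB₁ (hy 1 trivial)), add_zero]

end MvPolynomial

theorem stmt_4_general {k : Type*} [Field k] [IsAlgClosed k]
    (n m : ℕ)
    (h : Fin 2 → Fin m → MvPolynomial (Fin (n + 1)) k)
    (hdeg : ∀ i j, (h i j).IsHomogeneous 1)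
    (hrank : ∀ a : Fin (n + 1) → k, a ≠ 0 →
      (Matrix.of fun i j => MvPolynomial.eval a (h i j)).rank = 2)
    (q : Fin 2 → MvPolynomial (Fin (n + 1)) k)
    (hq : ∀ i, (q i).IsHomogeneous 2) :
    ∃ ℓ : Fin m → MvPolynomial (Fin (n + 1)) k,
      (∀ j, (ℓ j).IsHomogeneous 1) ∧ ∀ i, ∑ j, h i j * ℓ j = q i := by
  choose c hc using fun i j => exists_linearForm_eq (hdeg i j)
  obtain rfl : (fun i j => linearForm (c i j)) = h := funext₂ hc
  obtain ⟨ℓ, hℓ, hℓq⟩ := pi_homogeneousSubmodule_two_le_map_mulVecLin c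
    (fun _ hf => linearIndependent_apply_of_rank_eval_eq_two c hrank hf) (fun i _ => hq i)
  exact ⟨ℓ, fun j => hℓ j trivial, fun i => congrFun hℓq i⟩

/-- Let `n, m ≥ 1` and let `h i j` (`i : Fin 2`, `j : Fin m`) be linear forms
in `S = k[x₀,…,xₙ]` such that for every nonzero `a ∈ k^{n+1}` the `2 × m` matrix
`(h i j (a))` has rank 2 (i.e. the associated morphism `ε : mO_{ℙⁿ} → 2O_{ℙⁿ}(1)` is an
epimorphism).  Then the `k`-linear map `(S₁)^m → (S₂)²`,
`(ℓ₁,…,ℓ_m) ↦ (Σⱼ h₁ⱼℓⱼ, Σⱼ h₂ⱼℓⱼ)`, is surjective (i.e. `H⁰(ε(1))` is surjective). -/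
theorem stmt_4 {k : Type*} [Field k] [IsAlgClosed k] [CharZero k]
    (n m : ℕ) (hn : 1 ≤ n) (hm : 1 ≤ m)
    (h : Fin 2 → Fin m → MvPolynomial (Fin (n + 1)) k)
    (hdeg : ∀ i j, (h i j).IsHomogeneous 1)
    (hrank : ∀ a : Fin (n + 1) → k, a ≠ 0 →
      (Matrix.of fun i j => MvPolynomial.eval a (h i j)).rank = 2)
    (q : Fin 2 → MvPolynomial (Fin (n + 1)) k)
    (hq : ∀ i, (q i).IsHomogeneous 2) :
    ∃ ℓ : Fin m → MvPolynomial (Fin (n + 1)) k,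
      (∀ j, (ℓ j).IsHomogeneous 1) ∧ ∀ i, ∑ j, h i j * ℓ j = q i :=
  stmt_4_general n m h hdeg hrank q hq
end

section
/- Let n ≥ 1 and m ≥ 1 be integers and let h_{ij} (1 ≤ i ≤ 2, 1 ≤ j ≤ m) be linear forms in S = k[x₀,…,x_n] such that for every nonzero vector a ∈ k^{n+1} the 2×m scalar matrix (h_{ij}(a)) has rank 2 (the associated morphism ε : mO_{ℙⁿ} → 2O_{ℙⁿ}(1) is an epimorphism). Assume moreover that the k-linear map k^m → (S₁)², c ↦ (Σⱼ h_{1j}cⱼ, Σⱼ h_{2j}cⱼ), is not surjective (i.e., H⁰(ε) is not surjective). Then there exist linearly independent vectors a, b ∈ k^{n+1} such that the kernel of the k-linear map k^m → (k[s,t]₁)², c ↦ (Σⱼ h_{1j}(s·a + t·b)·cⱼ, Σⱼ h_{2j}(s·a + t·b)·cⱼ), has dimension exactly m − 3, where h_{ij}(s·a + t·b) ∈ k[s,t] denotes the binary linear form obtained by substituting x_r = s·a_r + t·b_r. Equivalently, the restriction of the kernel bundle K = Ker ε to the line L through a and b splits as (m−3)O_L ⊕ O_L(−2); in particular K(1)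 is not globally generated. -/
/-!
A pair of linear forms outside the image of `H⁰(ε)` gives, by duality, a nonzero pair of points
`u = (u₀, u₁)` with `h₀ⱼ(u₀) + h₁ⱼ(u₁) = 0` for all `j`. The pointwise rank condition forces the
two points of any nonzero such relation to be linearly independent: otherwise the relation
collapses to a linear relation between the two rows of `(hᵢⱼ(a))` at a single point `a`.

On the line through `u₀` and `u₁`, the kernel is that of the `4 × m` matrix `(hᵢⱼ(u_p))`. Its
left kernel consists of the `2 × 2` matrices `ρ` for which `(Σ_p ρᵢₚ u_p)ᵢ` is again a relation,
so every nonzero `ρ` in it is invertible. Over an algebraically closed field such a space of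
matrices has dimension at most one (`ρ - μσ` is singular for an eigenvalue `μ` of `σ⁻¹ρ`), and
it contains the identity, which is the relation `u` itself. Hence the matrix has rank `3`.
-/

open MvPolynomial Module Matrix

namespace MvPolynomial

variable {R σ : Type*} [CommSemiring R]

theorem IsHomogeneous.eq_of_coeff_single_one_eq {p q : MvPolynomial σ R}
    (hp : p.IsHomogeneous 1) (hq : q.IsHomogeneous 1)
    (h : ∀ r, coeff (Finsupp.single r 1) p = coeff (Finsupp.single r 1) q) : p = q := by
  ext d
  by_cases hd : d.degree = 1
  · obtain ⟨r, rfl⟩ : d ∈ Set.range fun r => Finsupp.single r 1 := by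
      rwa [Finsupp.range_single_one]
    exact h r
  · rw [hp.coeff_eq_zero hd, hq.coeff_eq_zero hd]

theorem smul_X_zero_add_smul_X_one_eq_zero_iff {k : Type*} [Field k] (α β : k) :
    α • (X 0 : MvPolynomial (Fin 2) k) + β • X 1 = 0 ↔ α = 0 ∧ β = 0 := by
  refine ⟨fun h => ?_, fun ⟨hα, hβ⟩ => by simp [hα, hβ]⟩
  have := Fintype.linearIndependent_iff.mp (linearIndependent_X (R := k) (σ := Fin 2)) ![α, β]
    (by simpa [Fin.sum_univ_two] using h)
  exact ⟨this 0, this 1⟩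

variable [Fintype σ]

noncomputable def linearPart (p : MvPolynomial σ R) : (σ → R) →ₗ[R] R :=
  ∑ r, coeff (Finsupp.single r 1) p • LinearMap.proj r

@[simp]
theorem linearPart_apply (p : MvPolynomial σ R) (a : σ → R) :
    linearPart p a = ∑ r, coeff (Finsupp.single r 1) p * a r := by
  simp [linearPart]

theorem IsHomogeneous.aeval_eq_sum {A : Type*} [CommSemiring A] [Algebra R A]
    {p : MvPolynomial σ R} (hp : p.IsHomogeneous 1) (f : σ → A) :
    MvPolynomial.aeval f p = ∑ r, coeff (Finsupp.single r 1) p • f r := by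
  classical
  have hsum : p = ∑ r, coeff (Finsupp.single r 1) p • X r := by
    refine hp.eq_of_coeff_single_one_eq
      ((homogeneousSubmodule σ R 1).sum_mem fun r _ => Submodule.smul_mem _ _ (isHomogeneous_X R r))
      fun r => ?_
    simp [coeff_sum, coeff_X, Finsupp.single_left_inj]
  conv_lhs => rw [hsum]
  simp [map_sum]

theorem IsHomogeneous.eval_eq_linearPart {p : MvPolynomial σ R} (hp : p.IsHomogeneous 1)
    (a : σ → R) : eval a p = linearPart p a := by
  simpa [coe_aeval_eq_eval, mul_comm] using hp.aeval_eq_sum a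

theorem IsHomogeneous.aeval_smul_X_zero_add_smul_X_one {p : MvPolynomial σ R}
    (hp : p.IsHomogeneous 1) (a b : σ → R) :
    MvPolynomial.aeval (fun r => a r • (X 0 : MvPolynomial (Fin 2) R) + b r • X 1) p =
      linearPart p a • X 0 + linearPart p b • X 1 := by
  rw [hp.aeval_eq_sum]
  simp [smul_add, Finset.sum_add_distrib, Finset.sum_smul, smul_smul]

end MvPolynomial

namespace Matrix

variable {K ι κ : Type*} [Field K] [Fintype ι]

theorem linearIndependent_row_of_rank_eq_card_s5 [Fintype κ] {A : Matrix ι κ K}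
    (hA : A.rank = Fintype.card ι) : LinearIndependent K A.row := by
  rw [linearIndependent_iff_card_eq_finrank_span, Set.finrank, ← rank_eq_finrank_span_row, hA]

theorem finrank_ker_mulVecLin_add_card [Fintype κ] (T : Matrix ι κ K) :
    finrank K (LinearMap.ker T.mulVecLin) + Fintype.card ι =
      Fintype.card κ + finrank K (LinearMap.ker Tᵀ.mulVecLin) := by
  have hT := LinearMap.finrank_range_add_finrank_ker T.mulVecLin
  have hTt := LinearMap.finrank_range_add_finrank_ker Tᵀ.mulVecLin
  have hrank := T.rank_transpose
  simp only [rank, finrank_fintype_fun_eq_card] at hT hTt hrank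
  omega

theorem exists_vecMul_eq_zero_of_not_surjective [Fintype κ] (M : Matrix ι κ K)
    (hM : ¬ Function.Surjective M.mulVec) : ∃ v ≠ 0, v ᵥ* M = 0 := by
  by_contra! hinj
  have hker : LinearMap.ker Mᵀ.mulVecLin = ⊥ := LinearMap.ker_eq_bot'.mpr fun v hv => by
    by_contra hv0
    exact hinj v hv0 (by rwa [← mulVec_transpose])
  have hT := LinearMap.finrank_range_add_finrank_ker Mᵀ.mulVecLin
  have hrank := M.rank_transpose
  rw [hker, finrank_bot, finrank_fintype_fun_eq_card] at hT
  apply hM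
  rw [← coe_mulVecLin, ← LinearMap.range_eq_top]
  apply Submodule.eq_top_of_finrank_eq
  simp only [rank] at hrank
  rw [finrank_fintype_fun_eq_card]
  omega

variable [DecidableEq ι]

theorem exists_det_sub_smul_eq_zero [IsAlgClosed K] [Nonempty ι] (ρ σ : Matrix ι ι K)
    (hσ : IsUnit σ.det) : ∃ μ : K, (ρ - μ • σ).det = 0 := by
  obtain ⟨μ, hμ⟩ := Module.End.exists_eigenvalue (toLin' (σ⁻¹ * ρ))
  obtain ⟨v, hv⟩ := hμ.exists_hasEigenvector
  have hρv : ρ *ᵥ v = μ • σ *ᵥ v := by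
    have h := hv.apply_eq_smul
    rw [toLin'_apply] at h
    rw [← mul_nonsing_inv_cancel_left σ ρ hσ, ← mulVec_mulVec, h, mulVec_smul]
  exact ⟨μ, exists_mulVec_eq_zero_iff.mp ⟨v, hv.2, by rw [sub_mulVec, smul_mulVec, hρv, sub_self]⟩⟩

theorem finrank_le_one_of_forall_isUnit_det [IsAlgClosed K] (P : Submodule K (Matrix ι ι K))
    (hP : ∀ M ∈ P, M ≠ 0 → IsUnit M.det) : finrank K P ≤ 1 := by
  rcases eq_or_ne P ⊥ with rfl | hP0
  · simp
  obtain ⟨σ, hσP, hσ0⟩ := Submodule.exists_mem_ne_zero_of_ne_bot hP0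
  have : Nonempty ι := ⟨(Function.ne_iff.mp hσ0).choose⟩
  refine finrank_le_one ⟨σ, hσP⟩ fun ⟨ρ, hρP⟩ => ?_
  obtain ⟨μ, hμ⟩ := exists_det_sub_smul_eq_zero ρ σ (hP σ hσP hσ0)
  refine ⟨μ, Subtype.ext (eq_of_sub_eq_zero ?_).symm⟩
  by_contra hne
  exact not_isUnit_zero (hμ ▸ hP _ (P.sub_mem hρP (P.smul_mem μ hσP)) hne)

end Matrix

section Relations

variable {k V ι κ τ : Type*} [Field k] [AddCommGroup V] [Module k V]

theorem exists_eq_smul_of_not_linearIndependent {u : Fin 2 → V}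
    (hu : ¬ LinearIndependent k u) : ∃ (v : V) (c : Fin 2 → k), u = fun i => c i • v := by
  have := FiniteDimensional.span_of_finite k (Set.finite_range u)
  have hle : finrank k (Submodule.span k (Set.range u)) ≤ 1 := by
    have hcard := finrank_range_le_card (R := k) u
    rw [linearIndependent_iff_card_eq_finrank_span] at hu
    simp only [Fintype.card_fin, Set.finrank] at hu hcard
    omega
  obtain ⟨v, hv⟩ := finrank_le_one_iff.mp hle
  choose c hc using fun i => hv ⟨u i, Submodule.subset_span (Set.mem_range_self i)⟩
  exact ⟨v, c, funext fun i => (congrArg Subtype.val (hc i)).symm⟩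

def evalMatrix (ℓ : ι → κ → V →ₗ[k] k) (u : τ → V) : Matrix (ι × τ) κ k :=
  Matrix.of fun ip j => ℓ ip.1 j (u ip.2)

theorem transpose_evalMatrix_mulVec [Fintype ι] [Fintype τ] (ℓ : ι → κ → V →ₗ[k] k)
    (u : τ → V) (ρ : ι × τ → k) (j : κ) :
    ((evalMatrix ℓ u)ᵀ *ᵥ ρ) j = ∑ i, ℓ i j (∑ p, ρ (i, p) • u p) := by
  simp [evalMatrix, mulVec, dotProduct, Fintype.sum_prod_type, mul_comm]

variable {ℓ : Fin 2 → κ → V →ₗ[k] k}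

theorem linearIndependent_of_forall_sum_eq_zero
    (hℓ : ∀ a ≠ 0, LinearIndependent k fun i j => ℓ i j a) {u : Fin 2 → V}
    (hu : ∀ j, ∑ i, ℓ i j (u i) = 0) (hu0 : u ≠ 0) : LinearIndependent k u := by
  by_contra hdep
  obtain ⟨v, c, rfl⟩ := exists_eq_smul_of_not_linearIndependent hdep
  have hv : v ≠ 0 := by
    rintro rfl
    exact hu0 (funext fun i => smul_zero (c i))
  refine hu0 (funext fun i => ?_)
  have hc := Fintype.linearIndependent_iff.mp (hℓ v hv) c
    (funext fun j => by simpa using hu j)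
  simp [hc i]

theorem finrank_ker_transpose_evalMatrix [IsAlgClosed k]
    (hℓ : ∀ a ≠ 0, LinearIndependent k fun i j => ℓ i j a) {u : Fin 2 → V}
    (hu : ∀ j, ∑ i, ℓ i j (u i) = 0) (hind : LinearIndependent k u) :
    finrank k (LinearMap.ker (evalMatrix ℓ u)ᵀ.mulVecLin) = 1 := by
  have hmem : ∀ ρ, ρ ∈ LinearMap.ker (evalMatrix ℓ u)ᵀ.mulVecLin ↔
      ∀ j, ∑ i, ℓ i j (∑ p, ρ (i, p) • u p) = 0 := fun ρ => by
    simp only [LinearMap.mem_ker, mulVecLin_apply, funext_iff, transpose_evalMatrix_mulVec,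
      Pi.zero_apply]
  refine le_antisymm ?_ ?_
  · let e := (LinearEquiv.curry k k (Fin 2) (Fin 2)).trans (Matrix.ofLinearEquiv k)
    rw [← e.finrank_map_eq]
    refine finrank_le_one_of_forall_isUnit_det _ ?_
    rintro _ ⟨ρ, hρ, rfl⟩ hne
    have hA0 : (fun i => ∑ p, ρ (i, p) • u p) ≠ 0 := fun hA => hne <| by
      have hρ0 : ρ = 0 := funext fun ⟨i, p⟩ =>
        Fintype.linearIndependent_iff.mp hind (fun p => ρ (i, p)) (congrFun hA i) p
      rw [hρ0, map_zero]
    rw [← isUnit_iff_isUnit_det, ← linearIndependent_rows_iff_isUnit]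
    refine LinearIndependent.of_comp (Fintype.linearCombination k u) ?_
    simpa [Function.comp_def, e, Fintype.linearCombination_apply] using
      linearIndependent_of_forall_sum_eq_zero hℓ ((hmem ρ).mp hρ) hA0
  · rw [Nat.one_le_iff_ne_zero, ← Nat.pos_iff_ne_zero, finrank_pos_iff_exists_ne_zero]
    refine ⟨⟨fun ip => if ip.1 = ip.2 then 1 else 0, (hmem _).mpr fun j => ?_⟩, ?_⟩
    · simpa [ite_smul] using hu j
    · simp [Subtype.ext_iff, funext_iff]

end Relations

section LinearForms

variable {k σ ι κ : Type*} [Field k] [Fintype σ] [Fintype κ]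

theorem exists_ne_zero_forall_sum_linearPart_eq_zero [Fintype ι]
    {h : ι → κ → MvPolynomial σ k} (hdeg : ∀ i j, (h i j).IsHomogeneous 1)
    (hH0 : ∃ q : ι → MvPolynomial σ k, (∀ i, (q i).IsHomogeneous 1) ∧
      ∀ c : κ → k, ¬ ∀ i, ∑ j, c j • h i j = q i) :
    ∃ u : ι → σ → k, u ≠ 0 ∧ ∀ j, ∑ i, linearPart (h i j) (u i) = 0 := by
  obtain ⟨q, hq, hqc⟩ := hH0
  let M : Matrix (ι × σ) κ k := Matrix.of fun ir j => coeff (Finsupp.single ir.2 1) (h ir.1 j)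
  have hM : ¬ Function.Surjective M.mulVec := fun hsurj => by
    obtain ⟨c, hc⟩ := hsurj fun ir => coeff (Finsupp.single ir.2 1) (q ir.1)
    refine hqc c fun i => IsHomogeneous.eq_of_coeff_single_one_eq
      ((homogeneousSubmodule σ k 1).sum_mem fun j _ => Submodule.smul_mem _ _ (hdeg i j))
      (hq i) fun r => ?_
    simpa [M, coeff_sum, mulVec, dotProduct, mul_comm] using congrFun hc (i, r)
  obtain ⟨ρ, hρ0, hρ⟩ := M.exists_vecMul_eq_zero_of_not_surjective hM
  refine ⟨Function.curry ρ, fun h0 => hρ0 (funext fun ir => congrFun (congrFun h0 ir.1) ir.2),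
    fun j => ?_⟩
  simpa [M, vecMul, dotProduct, Fintype.sum_prod_type, mul_comm] using congrFun hρ j

theorem ker_restrictionToLine_eq_ker_evalMatrix {h : ι → κ → MvPolynomial σ k}
    (hdeg : ∀ i j, (h i j).IsHomogeneous 1) (u : Fin 2 → σ → k) :
    LinearMap.ker (LinearMap.pi fun i => ∑ j : κ,
      (LinearMap.toSpanSingleton k (MvPolynomial (Fin 2) k)
        (aeval (fun r => u 0 r • (X 0 : MvPolynomial (Fin 2) k) + u 1 r • X 1) (h i j))).comp
        (LinearMap.proj j)) =
    LinearMap.ker (evalMatrix (fun i j => linearPart (h i j)) u).mulVecLin := by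
  ext c
  simp only [LinearMap.mem_ker, funext_iff, LinearMap.pi_apply, LinearMap.sum_apply,
    LinearMap.comp_apply, LinearMap.proj_apply, LinearMap.toSpanSingleton_apply,
    (hdeg _ _).aeval_smul_X_zero_add_smul_X_one, mulVecLin_apply, Prod.forall,
    Fin.forall_fin_two, Pi.zero_apply]
  refine forall_congr' fun i => ?_
  rw [← smul_X_zero_add_smul_X_one_eq_zero_iff]
  simp only [smul_add, Finset.sum_add_distrib, Finset.sum_smul, smul_smul, evalMatrix, mulVec,
    dotProduct, of_apply, mul_comm]

end LinearForms

theorem stmt_5_general {k : Type*} [Field k] [IsAlgClosed k]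
    (n m : ℕ)
    (h : Fin 2 → Fin m → MvPolynomial (Fin (n + 1)) k)
    (hdeg : ∀ i j, (h i j).IsHomogeneous 1)
    (hrank : ∀ a : Fin (n + 1) → k, a ≠ 0 →
      (Matrix.of fun i j => MvPolynomial.eval a (h i j)).rank = 2)
    (hH0 : ∃ q : Fin 2 → MvPolynomial (Fin (n + 1)) k, (∀ i, (q i).IsHomogeneous 1) ∧
      ∀ c : Fin m → k, ¬ (∀ i, ∑ j, c j • h i j = q i)) :
    ∃ a b : Fin (n + 1) → k, LinearIndependent k ![a, b] ∧
      Module.finrank k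
        (LinearMap.ker (LinearMap.pi (fun i : Fin 2 =>
          ∑ j : Fin m,
            (LinearMap.toSpanSingleton k (MvPolynomial (Fin 2) k)
              (MvPolynomial.aeval
                (fun r => a r • (MvPolynomial.X 0 : MvPolynomial (Fin 2) k) +
                  b r • MvPolynomial.X 1) (h i j))).comp
            (LinearMap.proj (R := k) (φ := fun _ : Fin m => k) j)))) = m - 3 := by
  have hℓ : ∀ a ≠ 0, LinearIndependent k fun i j => linearPart (h i j) a := fun a ha => by
    have hrow := linearIndependent_row_of_rank_eq_card_s5 (A := of fun i j => eval a (h i j))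
      (by rw [hrank a ha, Fintype.card_fin])
    convert hrow using 1
    ext i j
    simp [(hdeg i j).eval_eq_linearPart]
  obtain ⟨u, hu0, hu⟩ := exists_ne_zero_forall_sum_linearPart_eq_zero hdeg hH0
  have hind := linearIndependent_of_forall_sum_eq_zero hℓ hu hu0
  refine ⟨u 0, u 1, by rwa [← FinVec.etaExpand_eq u] at hind, ?_⟩
  have hcount := (evalMatrix (fun i j => linearPart (h i j)) u).finrank_ker_mulVecLin_add_card
  rw [finrank_ker_transpose_evalMatrix hℓ hu hind] at hcount
  rw [ker_restrictionToLine_eq_ker_evalMatrix hdeg u]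
  simp only [Fintype.card_prod, Fintype.card_fin] at hcount
  omega

/-- With `h i j` linear forms in `k[x₀,…,xₙ]` defining an epimorphism
`ε : mO_{ℙⁿ} → 2O_{ℙⁿ}(1)` (pointwise rank 2), suppose that `H⁰(ε)` is not surjective,
i.e. there is a pair of linear forms `(q₁, q₂)` not of the form `(Σⱼ h₁ⱼcⱼ, Σⱼ h₂ⱼcⱼ)`
with scalar coefficients `cⱼ`.  Then there is a line `L ⊆ ℙⁿ`, spanned by two linearly
independent vectors `a, b ∈ k^{n+1}`, such that the kernel of the `k`-linear map
`k^m → (k[s,t]₁)²`, `c ↦ (Σⱼ h₁ⱼ(s·a + t·b)·cⱼ, Σⱼ h₂ⱼ(s·a + t·b)·cⱼ)`, has dimension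
exactly `m - 3` (so that the kernel bundle `K = Ker ε` restricted to `L` splits as
`(m-3)O_L ⊕ O_L(-2)`; in particular `K(1)` is not globally generated). -/
theorem stmt_5 {k : Type*} [Field k] [IsAlgClosed k] [CharZero k]
    (n m : ℕ) (hn : 1 ≤ n) (hm : 1 ≤ m)
    (h : Fin 2 → Fin m → MvPolynomial (Fin (n + 1)) k)
    (hdeg : ∀ i j, (h i j).IsHomogeneous 1)
    (hrank : ∀ a : Fin (n + 1) → k, a ≠ 0 →
      (Matrix.of fun i j => MvPolynomial.eval a (h i j)).rank = 2)
    (hH0 : ∃ q : Fin 2 → MvPolynomial (Fin (n + 1)) k, (∀ i, (q i).IsHomogeneous 1) ∧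
      ∀ c : Fin m → k, ¬ (∀ i, ∑ j, c j • h i j = q i)) :
    ∃ a b : Fin (n + 1) → k, LinearIndependent k ![a, b] ∧
      Module.finrank k
        (LinearMap.ker (LinearMap.pi (fun i : Fin 2 =>
          ∑ j : Fin m,
            (LinearMap.toSpanSingleton k (MvPolynomial (Fin 2) k)
              (MvPolynomial.aeval
                (fun r => a r • (MvPolynomial.X 0 : MvPolynomial (Fin 2) k) +
                  b r • MvPolynomial.X 1) (h i j))).comp
            (LinearMap.proj (R := k) (φ := fun _ : Fin m => k) j)))) = m - 3 :=
  stmt_5_general n m h hdeg hrank hH0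
end

section
/- Let S = k[x₀,x₁,x₂] with k a field of characteristic 0. The k-linear map Φ : S₂ ⊗_k S₁ → S₁ ⊗_k S₂ determined by Φ(ℓ₁ℓ₂ ⊗ w) = ℓ₁ ⊗ ℓ₂w + ℓ₂ ⊗ ℓ₁w for linear forms ℓ₁, ℓ₂, w (equivalently, Φ(f ⊗ g) = Σ_{i=0}^{2} x_i ⊗ (∂f/∂x_i)·g for f ∈ S₂, g ∈ S₁) is surjective; since both sides have dimension 18, it is bijective. In particular, there exists a 3×6 matrix of linear forms in three variables for which the induced k-linear map (S₁)⁶ → (S₂)³ is bijective (i.e., a morphism η : 6O_{ℙ²} → 3O_{ℙ²}(1) with H⁰(η(1)) bijective). -/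
/-!
Surjectivity of `Φ` is a polarization identity: for linear forms `ℓ, a, b`,
`Φ (ℓa ⊗ b + ℓb ⊗ a - ab ⊗ ℓ) = 2 • ℓ ⊗ ab`, and the products `ab` span `S₂`.
As `S₂ ⊗ S₁ ≃ S₁ ⊗ S₂`, surjectivity gives bijectivity.
Since `Φ (f ⊗ w) = ∑ᵢ xᵢ ⊗ (∂f/∂xᵢ) w`, expanding both tensor products along a basis
`f₁, …, f₆` of `S₂` and the basis `x₀, x₁, x₂` of `S₁` identifies `Φ` with the map
`(S₁)⁶ → (S₂)³` given by the matrix `(∂fⱼ/∂xᵢ)`.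
-/

open MvPolynomial TensorProduct

/-- The product of two linear forms, as an element of the space `S₂` of quadratic forms. -/
noncomputable def linMul {k : Type*} [Field k]
    (f g : MvPolynomial.homogeneousSubmodule (Fin 3) k 1) :
    MvPolynomial.homogeneousSubmodule (Fin 3) k 2 :=
  ⟨f.1 * g.1,
    (MvPolynomial.mem_homogeneousSubmodule 2 _).2
      (((MvPolynomial.mem_homogeneousSubmodule 1 _).1 f.2).mul
        ((MvPolynomial.mem_homogeneousSubmodule 1 _).1 g.2))⟩

open scoped Pointwise

namespace MvPolynomial

variable {σ R : Type*} [CommSemiring R]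

instance [Finite σ] (n : ℕ) : Module.Finite R (homogeneousSubmodule σ R n) :=
  Module.Finite.iff_fg.mpr (homogeneousSubmodule_fg σ R n)

variable (σ R) in
noncomputable def basisX : Module.Basis σ R (homogeneousSubmodule σ R 1) :=
  (Module.Basis.span (linearIndependent_X σ R)).map
    (LinearEquiv.ofEq _ _ homogeneousSubmodule_one_eq_span_X.symm)

@[simp]
lemma coe_basisX (i : σ) : (basisX σ R i : MvPolynomial σ R) = X i := by
  simp [basisX]

theorem finrank_homogeneousSubmodule [Fintype σ] [StrongRankCondition R] (n : ℕ) :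
    Module.finrank R (homogeneousSubmodule σ R n) = (Fintype.card σ).multichoose n := by
  classical
  have hdeg : {d : σ →₀ ℕ | d.degree = n} =
      ↑(Finset.univ.finsuppAntidiag n : Finset (σ →₀ ℕ)) := by
    ext d
    simp [Finsupp.degree_eq_sum]
  let b := (basisRestrictSupport R {d : σ →₀ ℕ | d.degree = n}).map
    (LinearEquiv.ofEq _ _ (homogeneousSubmodule_eq_finsupp_supported σ R n).symm)
  rw [Module.finrank_eq_nat_card_basis b, hdeg, Nat.card_coe_set_eq, Set.ncard_coe_finset,
    Finset.card_finsuppAntidiag_nat_eq_multichoose, Finset.card_univ]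

variable (R) in
noncomputable def pderivHom (i : σ) (n : ℕ) :
    homogeneousSubmodule σ R (n + 1) →ₗ[R] homogeneousSubmodule σ R n :=
  (pderiv i).toLinearMap.restrict fun _ hq => by simpa using hq.pderiv

@[simp]
lemma coe_pderivHom_apply (i : σ) (n : ℕ) (q : homogeneousSubmodule σ R (n + 1)) :
    (pderivHom R i n q : MvPolynomial σ R) = pderiv i (q : MvPolynomial σ R) :=
  rfl

end MvPolynomial

namespace TensorProduct

variable {R M N ι : Type*} [CommSemiring R] [AddCommMonoid M] [AddCommMonoid N]
  [Module R M] [Module R N] [Fintype ι] [DecidableEq ι]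

noncomputable def piEquivOfBasisLeft (b : Module.Basis ι R M) : (ι → N) ≃ₗ[R] M ⊗[R] N :=
  (Finsupp.linearEquivFunOnFinite R N ι).symm ≪≫ₗ (equivFinsuppOfBasisLeft b).symm

lemma piEquivOfBasisLeft_apply (b : Module.Basis ι R M) (u : ι → N) :
    piEquivOfBasisLeft b u = ∑ i, b i ⊗ₜ[R] u i := by
  simp [piEquivOfBasisLeft, Finsupp.sum_fintype]

theorem bijective_iff_of_apply_basis_tmul {M' P κ : Type*} [AddCommMonoid M'] [AddCommMonoid P]
    [Module R M'] [Module R P] [Fintype κ] [DecidableEq κ]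
    (e : Module.Basis ι R M) (f : Module.Basis κ R M') (Φ : M' ⊗[R] N →ₗ[R] M ⊗[R] P)
    (T : ι → κ → N →ₗ[R] P) (hΦ : ∀ j n, Φ (f j ⊗ₜ n) = ∑ i, e i ⊗ₜ T i j n) :
    Function.Bijective Φ ↔ Function.Bijective fun (u : κ → N) i => ∑ j, T i j (u j) := by
  have hcomm : Φ ∘ piEquivOfBasisLeft f =
      piEquivOfBasisLeft e ∘ fun (u : κ → N) i => ∑ j, T i j (u j) := by
    ext u
    simp only [Function.comp_apply, piEquivOfBasisLeft_apply, map_sum, hΦ, tmul_sum]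
    exact Finset.sum_comm
  rw [← EquivLike.bijective_comp (piEquivOfBasisLeft f), hcomm, EquivLike.comp_bijective]

end TensorProduct

section LinMul

variable {k : Type*} [Field k]

@[simp]
lemma coe_linMul (a b : homogeneousSubmodule (Fin 3) k 1) :
    (linMul a b : MvPolynomial (Fin 3) k) = a * b :=
  rfl

lemma linMul_comm (a b : homogeneousSubmodule (Fin 3) k 1) : linMul a b = linMul b a :=
  Subtype.ext (mul_comm _ _)

variable (k) in
noncomputable def linMulBilin :
    homogeneousSubmodule (Fin 3) k 1 →ₗ[k] homogeneousSubmodule (Fin 3) k 1 →ₗ[k]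
      homogeneousSubmodule (Fin 3) k 2 :=
  LinearMap.mk₂ k linMul (fun _ _ _ => Subtype.ext (add_mul _ _ _))
    (fun _ _ _ => Subtype.ext (smul_mul_assoc _ _ _)) (fun _ _ _ => Subtype.ext (mul_add _ _ _))
    (fun _ _ _ => Subtype.ext (mul_smul_comm _ _ _))

@[simp]
lemma linMulBilin_apply (a b : homogeneousSubmodule (Fin 3) k 1) :
    linMulBilin k a b = linMul a b :=
  rfl

theorem span_linMul_basisX :
    Submodule.span k (Set.image2 linMul (Set.range (basisX (Fin 3) k))
      (Set.range (basisX (Fin 3) k))) = ⊤ := by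
  apply Submodule.map_injective_of_injective (Submodule.injective_subtype _)
  rw [Submodule.map_span, Submodule.map_top, Submodule.range_subtype]
  calc Submodule.span k _ = Submodule.span k (Set.range X * Set.range X) := by
        congr 1
        ext p
        simp [Set.mem_mul]
    _ = homogeneousSubmodule (Fin 3) k 1 ^ 2 := by
        rw [← Submodule.span_mul_span, ← homogeneousSubmodule_one_eq_span_X, pow_two]
    _ = homogeneousSubmodule (Fin 3) k 2 := homogeneousSubmodule_one_pow k 2

variable (Φ : homogeneousSubmodule (Fin 3) k 2 ⊗[k] homogeneousSubmodule (Fin 3) k 1 →ₗ[k]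
    homogeneousSubmodule (Fin 3) k 1 ⊗[k] homogeneousSubmodule (Fin 3) k 2)
  (hΦ : ∀ ℓ₁ ℓ₂ w : homogeneousSubmodule (Fin 3) k 1,
    Φ (linMul ℓ₁ ℓ₂ ⊗ₜ[k] w) = ℓ₁ ⊗ₜ[k] linMul ℓ₂ w + ℓ₂ ⊗ₜ[k] linMul ℓ₁ w)
include hΦ

theorem tmul_linMul_mem_range [NeZero (2 : k)] (ℓ a b : homogeneousSubmodule (Fin 3) k 1) :
    ℓ ⊗ₜ[k] linMul a b ∈ LinearMap.range Φ := by
  refine ⟨(2 : k)⁻¹ • (linMul ℓ a ⊗ₜ b + linMul ℓ b ⊗ₜ a - linMul a b ⊗ₜ ℓ), ?_⟩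
  rw [map_smul, map_sub, map_add, hΦ, hΦ, hΦ, linMul_comm b a, linMul_comm b ℓ, linMul_comm a ℓ,
    inv_smul_eq_iff₀ two_ne_zero, two_smul]
  abel

theorem surjective_of_apply_linMul_tmul [NeZero (2 : k)] : Function.Surjective Φ := by
  rw [← LinearMap.range_eq_top, eq_top_iff, ← span_tmul_eq_top, Submodule.span_le]
  rintro _ ⟨ℓ, q, rfl⟩
  suffices (LinearMap.range Φ).comap (TensorProduct.mk k _ _ ℓ) = ⊤ from
    Submodule.mem_comap.mp (this ▸ Submodule.mem_top (x := q))
  rw [eq_top_iff, ← span_linMul_basisX, Submodule.span_le]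
  rintro _ ⟨a, -, b, -, rfl⟩
  exact tmul_linMul_mem_range Φ hΦ ℓ a b

theorem bijective_of_apply_linMul_tmul [NeZero (2 : k)] : Function.Bijective Φ := by
  have hsurj := surjective_of_apply_linMul_tmul Φ hΦ
  refine ⟨?_, hsurj⟩
  have hend : Function.Injective ((TensorProduct.comm k _ _).toLinearMap ∘ₗ Φ) :=
    Module.End.injective_of_surjective k _ ((TensorProduct.comm k _ _).surjective.comp hsurj)
  exact Function.Injective.of_comp (f := TensorProduct.comm k _ _) hend

theorem apply_tmul_eq_sum_pderiv (q : homogeneousSubmodule (Fin 3) k 2)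
    (w : homogeneousSubmodule (Fin 3) k 1) :
    Φ (q ⊗ₜ[k] w) = ∑ i, basisX (Fin 3) k i ⊗ₜ[k] linMul (pderivHom k i 1 q) w := by
  suffices Φ ∘ₗ (TensorProduct.mk k _ _).flip w = ∑ i, TensorProduct.mk k _ _
      (basisX (Fin 3) k i) ∘ₗ (linMulBilin k).flip w ∘ₗ pderivHom k i 1 by
    simpa using LinearMap.congr_fun this q
  refine LinearMap.ext_on span_linMul_basisX ?_
  rintro _ ⟨_, ⟨a, rfl⟩, _, ⟨b, rfl⟩, rfl⟩
  have hder : ∀ i, pderivHom k i 1 (linMul (basisX _ k a) (basisX _ k b)) =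
      (if a = i then (1 : k) else 0) • basisX _ k b +
        (if b = i then (1 : k) else 0) • basisX _ k a := by
    intro i
    ext1
    simp only [coe_pderivHom_apply, coe_linMul, coe_basisX, Derivation.leibniz, pderiv_X,
      Pi.single_apply, Submodule.coe_add, Submodule.coe_smul]
    split_ifs <;> simp [add_comm]
  simp only [LinearMap.comp_apply, LinearMap.flip_apply, mk_apply, hΦ, LinearMap.coe_sum,
    Finset.sum_apply, hder, map_add, map_smul, Finset.sum_add_distrib]
  simp only [ite_smul, one_smul, zero_smul, Finset.sum_ite_eq, Finset.mem_univ, if_true,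
    linMulBilin_apply]

end LinMul

/-- For `S = k[x₀,x₁,x₂]` over a field `k` of characteristic 0, the
`k`-linear map `Φ : S₂ ⊗ S₁ → S₁ ⊗ S₂` determined by `Φ(ℓ₁ℓ₂ ⊗ w) = ℓ₁ ⊗ ℓ₂w + ℓ₂ ⊗ ℓ₁w`
for linear forms `ℓ₁, ℓ₂, w` is surjective, hence (both sides having dimension 18)
bijective.  In particular there is a `3 × 6` matrix of linear forms in three variables for
which the induced `k`-linear map `(S₁)⁶ → (S₂)³` is bijective. -/
theorem stmt_11 {k : Type*} [Field k] [CharZero k]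
    (Φ : (MvPolynomial.homogeneousSubmodule (Fin 3) k 2 ⊗[k]
          MvPolynomial.homogeneousSubmodule (Fin 3) k 1) →ₗ[k]
         (MvPolynomial.homogeneousSubmodule (Fin 3) k 1 ⊗[k]
          MvPolynomial.homogeneousSubmodule (Fin 3) k 2))
    (hΦ : ∀ ℓ₁ ℓ₂ w : MvPolynomial.homogeneousSubmodule (Fin 3) k 1,
      Φ (linMul ℓ₁ ℓ₂ ⊗ₜ[k] w) = ℓ₁ ⊗ₜ[k] linMul ℓ₂ w + ℓ₂ ⊗ₜ[k] linMul ℓ₁ w) :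
    Function.Bijective Φ ∧
    ∃ h : Fin 3 → Fin 6 → MvPolynomial (Fin 3) k,
      (∀ i j, (h i j).IsHomogeneous 1) ∧
      (∀ ℓ ℓ' : Fin 6 → MvPolynomial (Fin 3) k,
        (∀ j, (ℓ j).IsHomogeneous 1) → (∀ j, (ℓ' j).IsHomogeneous 1) →
        (∀ i, ∑ j, h i j * ℓ j = ∑ j, h i j * ℓ' j) → ℓ = ℓ') ∧
      (∀ q : Fin 3 → MvPolynomial (Fin 3) k, (∀ i, (q i).IsHomogeneous 2) →
        ∃ ℓ : Fin 6 → MvPolynomial (Fin 3) k,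
          (∀ j, (ℓ j).IsHomogeneous 1) ∧ ∀ i, ∑ j, h i j * ℓ j = q i) := by
  have hΦbij := bijective_of_apply_linMul_tmul Φ hΦ
  have hrank : Module.finrank k (homogeneousSubmodule (Fin 3) k 2) = 6 := by
    rw [finrank_homogeneousSubmodule, Fintype.card_fin, Nat.multichoose_eq]
    rfl
  let f := Module.finBasisOfFinrankEq k _ hrank
  let H i j := pderivHom k i 1 (f j)
  have hH : Function.Bijective fun (u : Fin 6 → homogeneousSubmodule (Fin 3) k 1) i =>
      ∑ j, linMulBilin k (H i j) (u j) :=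
    (bijective_iff_of_apply_basis_tmul (basisX (Fin 3) k) f Φ (fun i j => linMulBilin k (H i j))
      fun j w => by simpa using apply_tmul_eq_sum_pderiv Φ hΦ (f j) w).1 hΦbij
  refine ⟨hΦbij, fun i j => H i j, fun i j => (H i j).2, ?_, ?_⟩
  · intro ℓ ℓ' hℓ hℓ' heq
    have hu := hH.1 (a₁ := fun j => ⟨ℓ j, hℓ j⟩) (a₂ := fun j => ⟨ℓ' j, hℓ' j⟩)
      (funext fun i => Subtype.ext (by simpa using heq i))
    exact funext fun j => congrArg Subtype.val (congrFun hu j)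
  · intro q hq
    obtain ⟨u, hu⟩ := hH.2 fun i => ⟨q i, hq i⟩
    exact ⟨fun j => u j, fun j => (u j).2,
      fun i => by simpa using congrArg Subtype.val (congrFun hu i)⟩
end

section
/- Let U₁, U₂, U₃ be 2-dimensional linear subspaces of k⁴ with Uᵢ ∩ Uⱼ = 0 for i ≠ j (three mutually disjoint lines L₁, L₂, L₃ in ℙ³), and let W be a 2-dimensional linear subspace of k⁴ with W ∩ Uᵢ ≠ 0 for i = 1, 2, 3 (a line meeting each of L₁, L₂, L₃, i.e., a 3-secant of L₁ ∪ L₂ ∪ L₃). Then every homogeneous quadratic form in k[x₀,…,x₃] vanishing on U₁ ∪ U₂ ∪ U₃ also vanishes on W; in other words, every 3-secant line of three mutually disjoint lines is contained in every quadric surface containing the three lines. -/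
/-!
Choose nonzero `wᵢ ∈ W ∩ Uᵢ`. Disjointness of the `Uᵢ` makes `w₁, w₂` a basis of `W` and forces
`w₃ = a w₁ + b w₂` with `a, b ≠ 0`. A quadratic form restricted to `W` is a binary quadratic form:
`q (s w₁ + t w₂) = s² q(w₁) + s t B + t² q(w₂)` with `B = q(w₁ + w₂) - q(w₁) - q(w₂)`. Since
`q(w₁) = q(w₂) = 0`, we get `0 = q(w₃) = a b B`, so `B = 0` and `q` vanishes on `W`.
-/

namespace MvPolynomial.IsHomogeneous

variable {σ R : Type*}

theorem eval_smul_add_smul [CommRing R] {p : MvPolynomial σ R} (hp : p.IsHomogeneous 2)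
    (x y : σ → R) (s t : R) :
    eval (s • x + t • y) p = s ^ 2 * eval x p
      + s * t * (eval (x + y) p - eval x p - eval y p) + t ^ 2 * eval y p := by
  -- both sides are linear in `p`, and degree-2 forms are spanned by the products `X i * X j`
  rw [← mem_homogeneousSubmodule, ← homogeneousSubmodule_one_pow, homogeneousSubmodule_one_eq_span_X,
    pow_two, Submodule.span_mul_span] at hp
  induction hp using Submodule.span_induction with
  | mem _ h =>
    obtain ⟨_, ⟨i, rfl⟩, _, ⟨j, rfl⟩, rfl⟩ := h
    simp only [eval_mul, eval_X, Pi.add_apply, Pi.smul_apply, smul_eq_mul]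
    ring
  | zero => simp
  | add p q _ _ hp hq => simp only [map_add, hp, hq]; ring
  | smul c p _ hp => simp only [smul_eq_C_mul, eval_mul, eval_C, hp]; ring

theorem eval_smul_add_smul_eq_zero [CommRing R] [IsDomain R] {p : MvPolynomial σ R}
    (hp : p.IsHomogeneous 2) {x y : σ → R} (hx : eval x p = 0) (hy : eval y p = 0) {a b : R}
    (ha : a ≠ 0) (hb : b ≠ 0) (hab : eval (a • x + b • y) p = 0) (s t : R) :
    eval (s • x + t • y) p = 0 := by
  have hxy : eval (x + y) p = 0 := by
    simpa [hp.eval_smul_add_smul, hx, hy, ha, hb] using hab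
  simp [hp.eval_smul_add_smul, hx, hy, hxy]

end MvPolynomial.IsHomogeneous

section

variable {K V : Type*} [Field K] [AddCommGroup V] [Module K V]

theorem linearIndependent_pair_of_inf_eq_bot {U U' : Submodule K V} (h : U ⊓ U' = ⊥)
    {u v : V} (hu : u ∈ U) (hv : v ∈ U') (hu0 : u ≠ 0) (hv0 : v ≠ 0) :
    LinearIndependent K ![u, v] := by
  refine (LinearIndependent.pair_iff' hu0).mpr fun a hav => hv0 ?_
  have : v ∈ U ⊓ U' := ⟨hav ▸ U.smul_mem a hu, hv⟩
  simpa [h] using this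

theorem Submodule.eq_span_pair_of_finrank_eq_two {W : Submodule K V}
    (hW : Module.finrank K W = 2) {u v : V} (hu : u ∈ W) (hv : v ∈ W)
    (huv : LinearIndependent K ![u, v]) : W = Submodule.span K {u, v} := by
  have : FiniteDimensional K W := Module.finite_of_finrank_eq_succ hW
  refine (Submodule.eq_of_le_of_finrank_le ?_ ?_).symm
  · exact Submodule.span_le.mpr (Set.pair_subset hu hv)
  · rw [hW, ← Matrix.range_cons_cons_empty, finrank_span_eq_card huv, Fintype.card_fin]

theorem smul_add_smul_right_ne_zero {U U' : Submodule K V} (h : U ⊓ U' = ⊥) {u v : V}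
    (hu : u ∈ U) {a b : K} (hmem : a • u + b • v ∈ U') (hne : a • u + b • v ≠ 0) : b ≠ 0 := by
  rintro rfl
  rw [zero_smul, add_zero] at hmem hne
  have : a • u ∈ U ⊓ U' := ⟨U.smul_mem a hu, hmem⟩
  rw [h, Submodule.mem_bot] at this
  exact hne this

end

theorem stmt_13_general {k : Type*} [Field k]
    (U : Fin 3 → Submodule k (Fin 4 → k))
    (hUdisj : ∀ i j, i ≠ j → U i ⊓ U j = ⊥)
    (W : Submodule k (Fin 4 → k))
    (hWrank : Module.finrank k W = 2)
    (hsec : ∀ i, W ⊓ U i ≠ ⊥)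
    (q : MvPolynomial (Fin 4) k) (hq : q.IsHomogeneous 2)
    (hvan : ∀ i, ∀ v ∈ U i, MvPolynomial.eval v q = 0) :
    ∀ w ∈ W, MvPolynomial.eval w q = 0 := by
  obtain ⟨w₁, ⟨hw₁W, hw₁U⟩, hw₁0⟩ := Submodule.exists_mem_ne_zero_of_ne_bot (hsec 0)
  obtain ⟨w₂, ⟨hw₂W, hw₂U⟩, hw₂0⟩ := Submodule.exists_mem_ne_zero_of_ne_bot (hsec 1)
  obtain ⟨w₃, ⟨hw₃W, hw₃U⟩, hw₃0⟩ := Submodule.exists_mem_ne_zero_of_ne_bot (hsec 2)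
  have hW : W = Submodule.span k {w₁, w₂} := Submodule.eq_span_pair_of_finrank_eq_two hWrank hw₁W
    hw₂W (linearIndependent_pair_of_inf_eq_bot (hUdisj 0 1 (by decide)) hw₁U hw₂U hw₁0 hw₂0)
  obtain ⟨a, b, rfl⟩ := Submodule.mem_span_pair.mp (hW ▸ hw₃W)
  have hb : b ≠ 0 := smul_add_smul_right_ne_zero (hUdisj 0 2 (by decide)) hw₁U hw₃U hw₃0
  have ha : a ≠ 0 := by
    rw [add_comm] at hw₃U hw₃0
    exact smul_add_smul_right_ne_zero (hUdisj 1 2 (by decide)) hw₂U hw₃U hw₃0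
  intro w hw
  obtain ⟨s, t, rfl⟩ := Submodule.mem_span_pair.mp (hW ▸ hw)
  exact hq.eval_smul_add_smul_eq_zero (hvan 0 w₁ hw₁U) (hvan 1 w₂ hw₂U) ha hb (hvan 2 _ hw₃U) s t

/-- Let `L₁, L₂, L₃` be mutually disjoint lines in `ℙ³`, given by
2-dimensional subspaces `U₁, U₂, U₃ ⊆ k⁴` intersecting pairwise in `0`, and let `W ⊆ k⁴`
be a 2-dimensional subspace with `W ∩ Uᵢ ≠ 0` for each `i` (a 3-secant line of
`L₁ ∪ L₂ ∪ L₃`).  Then every quadratic form vanishing on `U₁ ∪ U₂ ∪ U₃` also vanishes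
on `W`: every 3-secant of three mutually disjoint lines lies on every quadric surface
containing the three lines. -/
theorem stmt_13 {k : Type*} [Field k] [IsAlgClosed k] [CharZero k]
    (U : Fin 3 → Submodule k (Fin 4 → k))
    (hUrank : ∀ i, Module.finrank k (U i) = 2)
    (hUdisj : ∀ i j, i ≠ j → U i ⊓ U j = ⊥)
    (W : Submodule k (Fin 4 → k))
    (hWrank : Module.finrank k W = 2)
    (hsec : ∀ i, W ⊓ U i ≠ ⊥)
    (q : MvPolynomial (Fin 4) k) (hq : q.IsHomogeneous 2)
    (hvan : ∀ i, ∀ v ∈ U i, MvPolynomial.eval v q = 0) :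
    ∀ w ∈ W, MvPolynomial.eval w q = 0 :=
  stmt_13_general U hUdisj W hWrank hsec q hq hvan
end
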